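/- Let f : {a}* → {a,b}* be the function defined by f(a^{2n}) = (ab)ⁿ and f(a^{2n+1}) = (ab)ⁿ·a·(ab)ⁿ. Then f is not A-continuous: there exists a language L ⊆ {a,b}* recognized by a finite aperiodic monoid such that the preimage f⁻¹(L) is not recognized by any finite aperiodic monoid. -/

import Mathlib

/-- The two-letter alphabet `{a, b}`. -/
inductive AB : Type
  | a : AB
  | b : AB
deriving DecidableEq

/-- `wpow x k` is the `k`-fold concatenation `xᵏ` of the word `x`. -/
def wpow {A : Type*} (x : List A) : ℕ → List A
  | 0 => []
  | n + 1 => x ++ wpow x n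

/-- The function `f(a^{2n}) = (ab)ⁿ` and `f(a^{2n+1}) = (ab)ⁿ·a·(ab)ⁿ`. -/
def fMid (w : List Unit) : List AB :=
  if w.length % 2 = 0 then wpow [AB.a, AB.b] (w.length / 2)
  else wpow [AB.a, AB.b] (w.length / 2) ++ [AB.a] ++ wpow [AB.a, AB.b] (w.length / 2)

/-- A monoid is aperiodic if every element `x` satisfies `x^{n+1} = xⁿ` for
some `n`. -/
def IsAperiodic (M : Type) [Monoid M] : Prop :=
  ∀ x : M, ∃ n : ℕ, x ^ (n + 1) = x ^ n

/-- `L` is recognized by a finite aperiodic monoid. -/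
def RecogByFinAperiodicMonoid {A : Type} (L : Set (List A)) : Prop :=
  ∃ (M : Type) (_ : Fintype M) (_ : Monoid M), IsAperiodic M ∧
    ∃ (φ : FreeMonoid A →* M) (S : Set M),
      L = {w : List A | φ (FreeMonoid.ofList w) ∈ S}

/-!
The language `(ab)*` is star-free: it is recognized by the aperiodic Brandt monoid `B₂¹`, hence so
is its complement `L`. Now `f(a²ⁿ) = (ab)ⁿ ∈ (ab)*`, while `f(a²ⁿ⁺¹)` has odd length, so
`f⁻¹(L)` is the set of words of odd length. An aperiodic monoid cannot recognize it: for the image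
`x` of the letter, `x²ⁿ⁺¹ = x²ⁿ` once `xⁿ⁺¹ = xⁿ`.
-/

theorem RecogByFinAperiodicMonoid.compl {A : Type} {L : Set (List A)}
    (h : RecogByFinAperiodicMonoid L) : RecogByFinAperiodicMonoid Lᶜ := by
  obtain ⟨M, hfin, hmon, hM, φ, S, rfl⟩ := h
  exact ⟨M, hfin, hmon, hM, φ, Sᶜ, rfl⟩

theorem IsAperiodic.exists_pow_two_mul_succ_eq {M : Type} [Monoid M] (hM : IsAperiodic M)
    (x : M) : ∃ n : ℕ, x ^ (2 * n + 1) = x ^ (2 * n) := by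
  obtain ⟨n, hn⟩ := hM x
  refine ⟨n, ?_⟩
  rw [two_mul, add_assoc, pow_add, hn, ← pow_add]

theorem MonoidHom.map_ofList_replicate {A M : Type} [Monoid M] (φ : FreeMonoid A →* M)
    (c : A) (k : ℕ) : φ (FreeMonoid.ofList (List.replicate k c)) = φ (FreeMonoid.of c) ^ k := by
  induction k with
  | zero => simp
  | succ k ih => rw [List.replicate_succ, FreeMonoid.ofList_cons, map_mul, ih, pow_succ']

theorem not_recogByFinAperiodicMonoid_odd_length {A : Type} [Nonempty A] :
    ¬ RecogByFinAperiodicMonoid {w : List A | Odd w.length} := by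
  rintro ⟨M, _, _, hM, φ, S, hL⟩
  obtain ⟨c⟩ := ‹Nonempty A›
  obtain ⟨n, hn⟩ := hM.exists_pow_two_mul_succ_eq (φ (FreeMonoid.of c))
  have hmem (k : ℕ) : Odd k ↔ φ (FreeMonoid.of c) ^ k ∈ S := by
    simpa [← φ.map_ofList_replicate] using Set.ext_iff.mp hL (List.replicate k c)
  have h := (hmem (2 * n + 1)).trans (hn ▸ (hmem (2 * n)).symm)
  exact Nat.not_odd_iff_even.mpr (even_two_mul n) (h.mp (odd_two_mul_add_one n))

theorem length_wpow {A : Type*} (x : List A) (n : ℕ) : (wpow x n).length = n * x.length := by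
  induction n with
  | zero => simp [wpow]
  | succ n ih => simp [wpow, ih, Nat.succ_mul, Nat.add_comm]

theorem append_mem_range_wpow_iff {A : Type*} {x : List A} (hx : x ≠ []) (w : List A) :
    x ++ w ∈ Set.range (wpow x) ↔ w ∈ Set.range (wpow x) := by
  constructor
  · rintro ⟨_ | n, hn⟩
    · exact absurd (List.append_eq_nil_iff.mp hn.symm).1 hx
    · exact ⟨n, List.append_cancel_left hn⟩
  · rintro ⟨n, rfl⟩
    exact ⟨n + 1, rfl⟩

theorem prefix_of_mem_range_wpow {A : Type*} {x w : List A} (hw : w ∈ Set.range (wpow x))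
    (hne : w ≠ []) : x <+: w := by
  obtain ⟨_ | n, rfl⟩ := hw
  · exact absurd rfl hne
  · exact List.prefix_append _ _

/-- The syntactic monoid `B₂¹` of `(ab)*`. A nonempty word without a factor `aa` or `bb` is
determined, up to the syntactic congruence, by its first and last letters, which `a`, `b`, `ab`,
`ba` record; `zero` is the class of the words with such a factor. -/
inductive B21 : Type
  | one | zero | a | b | ab | ba
deriving DecidableEq

namespace B21

instance : Fintype B21 :=
  ⟨{one, zero, a, b, ab, ba}, fun x => by cases x <;> simp⟩

def mul : B21 → B21 → B21
  | one, x => x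
  | x, one => x
  | a, b => ab
  | a, ba => a
  | b, a => ba
  | b, ab => b
  | ab, a => a
  | ab, ab => ab
  | ba, b => b
  | ba, ba => ba
  | _, _ => zero

instance : Monoid B21 where
  mul := mul
  one := one
  one_mul x := by cases x <;> rfl
  mul_one x := by cases x <;> rfl
  mul_assoc := by decide

theorem isAperiodic : IsAperiodic B21 := fun x => ⟨2, by revert x; decide⟩

theorem b_mul_notMem (y : B21) : b * y ∉ ({1, ab} : Set B21) := by
  revert y; decide

theorem a_mul_a_mul_notMem (y : B21) : a * a * y ∉ ({1, ab} : Set B21) := by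
  revert y; decide

theorem a_mul_b_mul_mem_iff (y : B21) :
    a * b * y ∈ ({1, ab} : Set B21) ↔ y ∈ ({1, ab} : Set B21) := by
  revert y; decide

def ofAB : FreeMonoid AB →* B21 :=
  FreeMonoid.lift fun | AB.a => a | AB.b => b

theorem ofAB_ofList_cons_a (w : List AB) :
    ofAB (FreeMonoid.ofList (AB.a :: w)) = a * ofAB (FreeMonoid.ofList w) := by
  rw [FreeMonoid.ofList_cons, map_mul]; rfl

theorem ofAB_ofList_cons_b (w : List AB) :
    ofAB (FreeMonoid.ofList (AB.b :: w)) = b * ofAB (FreeMonoid.ofList w) := by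
  rw [FreeMonoid.ofList_cons, map_mul]; rfl

end B21

open B21 in
theorem mem_range_wpow_ab_iff :
    ∀ w : List AB, w ∈ Set.range (wpow [AB.a, AB.b]) ↔
      ofAB (FreeMonoid.ofList w) ∈ ({1, ab} : Set B21)
  | [] => iff_of_true ⟨0, rfl⟩ (Or.inl rfl)
  | [AB.a] => iff_of_false (fun h => by simpa using prefix_of_mem_range_wpow h) (by decide)
  | AB.b :: w => by
    refine iff_of_false (fun h => by simpa using prefix_of_mem_range_wpow h) ?_
    rw [ofAB_ofList_cons_b]
    exact b_mul_notMem _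
  | AB.a :: AB.a :: w => by
    refine iff_of_false (fun h => by simpa using prefix_of_mem_range_wpow h) ?_
    rw [ofAB_ofList_cons_a, ofAB_ofList_cons_a, ← mul_assoc]
    exact a_mul_a_mul_notMem _
  | AB.a :: AB.b :: w => by
    rw [ofAB_ofList_cons_a, ofAB_ofList_cons_b, ← mul_assoc, a_mul_b_mul_mem_iff]
    exact (append_mem_range_wpow_iff (List.cons_ne_nil _ _) w).trans (mem_range_wpow_ab_iff w)

theorem recogByFinAperiodicMonoid_range_wpow_ab :
    RecogByFinAperiodicMonoid (Set.range (wpow [AB.a, AB.b])) :=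
  ⟨B21, inferInstance, inferInstance, B21.isAperiodic, B21.ofAB, {1, B21.ab},
    Set.ext mem_range_wpow_ab_iff⟩

theorem fMid_mem_range_wpow_iff (w : List Unit) :
    fMid w ∈ Set.range (wpow [AB.a, AB.b]) ↔ Even w.length := by
  unfold fMid
  split_ifs with h
  · exact iff_of_true ⟨_, rfl⟩ (Nat.even_iff.mpr h)
  · refine iff_of_false ?_ (by rwa [Nat.even_iff])
    rintro ⟨k, hk⟩
    have := congrArg List.length hk
    simp only [List.length_append, length_wpow, List.length_cons, List.length_nil] at this
    omega

theorem fMid_preimage_compl_range_wpow :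
    fMid ⁻¹' (Set.range (wpow [AB.a, AB.b]))ᶜ = {w | Odd w.length} := by
  ext w
  exact (not_congr (fMid_mem_range_wpow_iff w)).trans Nat.not_even_iff_odd

/-- `fMid` is not A-continuous: some language recognized by a finite aperiodic
monoid has a preimage that is not recognized by any finite aperiodic monoid. -/
theorem fMid_not_a_continuous :
    ∃ L : Set (List AB), RecogByFinAperiodicMonoid L ∧
      ¬ RecogByFinAperiodicMonoid (fMid ⁻¹' L) := by
  refine ⟨(Set.range (wpow [AB.a, AB.b]))ᶜ, recogByFinAperiodicMonoid_range_wpow_ab.compl, ?_⟩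
  rw [fMid_preimage_compl_range_wpow]
  exact not_recogByFinAperiodicMonoid_odd_length
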